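/- Let a, b, c be pairwise distinct complex numbers, R = ℂ[z], T₁ = R/(z−a), and T₂ = R/(z−b) ⊕ R/(z−c), and let f : T₁ → T₂ be an R-module homomorphism (necessarily f = 0). Call an admissible chain a sequence of pairs (A₀,B₀) ⊆ (A₁,B₁) ⊆ (A₂,B₂) ⊆ (A₃,B₃) with A_k ⊆ T₁ and B_k ⊆ T₂ submodules satisfying f(A_k) ⊆ B_k, (A₀,B₀) = (0,0), (A₃,B₃) = (T₁,T₂); say the k-th step has type 𝗂 if A_k = A_{k−1} and length(B_k/B_{k−1}) = 1, and type 𝗃 if B_k = B_{k−1} and length(A_k/A_{k−1}) = 1. Then there are exactly 2 admissible chains of each of the step types (𝗂,𝗂,𝗃), (𝗂,𝗃,𝗂) and (𝗃,𝗂,𝗂). -/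

import Mathlib

open Order in
/-- The length of a module: the supremum of the lengths of strictly increasing chains of
submodules (the Krull dimension of the submodule lattice). -/
noncomputable def moduleLength (R : Type*) [Ring R] (M : Type*) [AddCommGroup M]
    [Module R M] : WithBot ℕ∞ :=
  krullDim (Submodule R M)

/-- An admissible chain for a `ℂ[z]`-module map `f : T₁ → T₂`: an increasing sequence of
pairs `(A₀,B₀) ⊆ (A₁,B₁) ⊆ (A₂,B₂) ⊆ (A₃,B₃)` of submodules `A_k ⊆ T₁`, `B_k ⊆ T₂` with
`f(A_k) ⊆ B_k`, `(A₀,B₀) = (0,0)` and `(A₃,B₃) = (T₁,T₂)`. -/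
structure AdmChain {M N : Type*} [AddCommGroup M] [Module (Polynomial ℂ) M]
    [AddCommGroup N] [Module (Polynomial ℂ) N] (f : M →ₗ[Polynomial ℂ] N) where
  A : Fin 4 → Submodule (Polynomial ℂ) M
  B : Fin 4 → Submodule (Polynomial ℂ) N
  monoA : Monotone A
  monoB : Monotone B
  compat : ∀ k, (A k).map f ≤ B k
  A_zero : A 0 = ⊥
  B_zero : B 0 = ⊥
  A_last : A 3 = ⊤
  B_last : B 3 = ⊤

/-- The `(k+1)`-st step of an admissible chain has type `𝗂`:
`A_{k+1} = A_k` and `length(B_{k+1}/B_k) = 1`. -/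
def StepI {M N : Type*} [AddCommGroup M] [Module (Polynomial ℂ) M]
    [AddCommGroup N] [Module (Polynomial ℂ) N] {f : M →ₗ[Polynomial ℂ] N}
    (c : AdmChain f) (k : Fin 3) : Prop :=
  c.A k.succ = c.A k.castSucc ∧
  moduleLength (Polynomial ℂ)
    (↥(c.B k.succ) ⧸ (c.B k.castSucc).comap (c.B k.succ).subtype) = 1

/-- The `(k+1)`-st step of an admissible chain has type `𝗃`:
`B_{k+1} = B_k` and `length(A_{k+1}/A_k) = 1`. -/
def StepJ {M N : Type*} [AddCommGroup M] [Module (Polynomial ℂ) M]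
    [AddCommGroup N] [Module (Polynomial ℂ) N] {f : M →ₗ[Polynomial ℂ] N}
    (c : AdmChain f) (k : Fin 3) : Prop :=
  c.B k.succ = c.B k.castSucc ∧
  moduleLength (Polynomial ℂ)
    (↥(c.A k.succ) ⧸ (c.A k.castSucc).comap (c.A k.succ).subtype) = 1

/-!
Since `z - a` acts invertibly on `T₂`, there are no nonzero maps `T₁ → T₂`, so `f = 0` and
the condition `f(A_k) ⊆ B_k` is vacuous. As `T₁` is simple, in a chain of each of the three
types the `A`-part is forced and the `B`-part is `0 ⋖ X ⋖ T₂` with one step repeated; so each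
count is the number of submodules `X` with `0 ⋖ X ⋖ T₂`. Because `z - b` and `z - c` are
coprime, every submodule of `T₂` is the product of its projections to the two simple factors,
which leaves exactly the two factors themselves.
-/
open Order Polynomial

lemma Nat.card_subtype_eq_of_iff_exists {α β : Type*} {P : α → Prop} {Q : β → Prop}
    (σ : β → α) (hσ : Function.Injective σ) (h : ∀ x, P x ↔ ∃ y, Q y ∧ x = σ y) :
    Nat.card {x // P x} = Nat.card {y // Q y} :=
  (Nat.card_congr <| Equiv.ofBijective
    (fun y : {y // Q y} => (⟨σ y, (h _).2 ⟨y, y.2, rfl⟩⟩ : {x // P x}))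
    ⟨fun _ _ hy => Subtype.ext (hσ (congrArg Subtype.val hy)), fun ⟨x, hx⟩ => by
      obtain ⟨y, hy, rfl⟩ := (h x).1 hx
      exact ⟨⟨y, hy⟩, rfl⟩⟩).symm

lemma moduleLength_eq_one_iff {R M : Type*} [Ring R] [AddCommGroup M] [Module R M] :
    moduleLength R M = 1 ↔ IsSimpleModule R M :=
  krullDim_eq_one_iff_of_boundedOrder.trans (isSimpleModule_iff R M).symm

lemma moduleLength_subquotient_eq_one_iff {R M : Type*} [Ring R] [AddCommGroup M] [Module R M]
    {A B : Submodule R M} (hAB : A ≤ B) :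
    moduleLength R (B ⧸ A.comap B.subtype) = 1 ↔ A ⋖ B :=
  moduleLength_eq_one_iff.trans (covBy_iff_quot_is_simple hAB).symm

section SimpleOrder

variable {α β : Type*} [PartialOrder α] [BoundedOrder α] [PartialOrder β] [BoundedOrder β]

lemma OrderIso.card_bot_covBy_covBy_top (e : α ≃o β) :
    Nat.card {x : α // ⊥ ⋖ x ∧ x ⋖ ⊤} = Nat.card {y : β // ⊥ ⋖ y ∧ y ⋖ ⊤} :=
  Nat.card_congr <| e.toEquiv.subtypeEquiv fun x => by
    rw [← e.map_bot, ← e.map_top]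
    exact and_congr (apply_covBy_apply_iff e).symm (apply_covBy_apply_iff e).symm

variable [IsSimpleOrder α] [IsSimpleOrder β]

lemma Prod.bot_covBy_and_covBy_top_iff {x : α × β} :
    (⊥ ⋖ x ∧ x ⋖ ⊤) ↔ x = (⊤, ⊥) ∨ x = (⊥, ⊤) := by
  obtain ⟨a, b⟩ := x
  change ((⊥, ⊥) ⋖ (a, b) ∧ (a, b) ⋖ (⊤, ⊤)) ↔ _
  rcases eq_bot_or_eq_top a with rfl | rfl <;> rcases eq_bot_or_eq_top b with rfl | rfl <;>
    simp [Prod.mk_covBy_mk_iff]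

lemma Prod.card_bot_covBy_covBy_top : Nat.card {x : α × β // ⊥ ⋖ x ∧ x ⋖ ⊤} = 2 := by
  simp_rw [Prod.bot_covBy_and_covBy_top_iff]
  rw [Nat.card_eq_two_iff]
  refine ⟨⟨_, .inl rfl⟩, ⟨_, .inr rfl⟩, by simp, ?_⟩
  ext ⟨x, rfl | rfl⟩ <;> simp

end SimpleOrder

section Coprime

variable {R M₁ M₂ : Type*} [CommRing R] [AddCommGroup M₁] [Module R M₁] [AddCommGroup M₂]
  [Module R M₂] {p q : R}

lemma smul_eq_self_of_add_eq_one {M : Type*} [AddCommGroup M] [Module R M] {u v : R}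
    (huv : u * p + v * q = 1) (hp : ∀ x : M, p • x = 0) (x : M) : (v * q) • x = x := by
  simpa [add_smul, mul_smul, hp] using congrArg (· • x) huv

lemma LinearMap.eq_zero_of_isCoprime (hpq : IsCoprime p q) (hp : ∀ x : M₁, p • x = 0)
    (hq : ∀ y : M₂, q • y = 0) (f : M₁ →ₗ[R] M₂) : f = 0 := by
  obtain ⟨u, v, huv⟩ := hpq
  ext x
  calc f x = (u * p) • f x := (smul_eq_self_of_add_eq_one ((add_comm _ _).trans huv) hq _).symm
    _ = 0 := by rw [mul_smul, ← map_smul, hp, map_zero, smul_zero]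

namespace Submodule

lemma mk_mem_iff_of_isCoprime (hpq : IsCoprime p q) (hp : ∀ x : M₁, p • x = 0)
    (hq : ∀ y : M₂, q • y = 0) (N : Submodule R (M₁ × M₂)) {x : M₁} {y : M₂} :
    (x, y) ∈ N ↔ (x, 0) ∈ N ∧ (0, y) ∈ N := by
  refine ⟨fun h => ?_, fun h => by simpa using N.add_mem h.1 h.2⟩
  obtain ⟨u, v, huv⟩ := hpq
  -- `v * q` acts as the identity on `M₁` and as zero on `M₂`; dually for `u * p`.
  have hx : (v * q) • (x, y) = (x, 0) := by
    rw [Prod.smul_mk, smul_eq_self_of_add_eq_one huv hp, mul_smul, hq, smul_zero]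
  have hy : (u * p) • (x, y) = (0, y) := by
    rw [Prod.smul_mk, smul_eq_self_of_add_eq_one ((add_comm _ _).trans huv) hq, mul_smul, hp,
      smul_zero]
  exact ⟨hx ▸ N.smul_mem _ h, hy ▸ N.smul_mem _ h⟩

lemma eq_prod_map_fst_map_snd_of_isCoprime (hpq : IsCoprime p q) (hp : ∀ x : M₁, p • x = 0)
    (hq : ∀ y : M₂, q • y = 0) (N : Submodule R (M₁ × M₂)) :
    N = (N.map (LinearMap.fst R M₁ M₂)).prod (N.map (LinearMap.snd R M₁ M₂)) := by
  refine le_antisymm (fun z hz => ⟨⟨z, hz, rfl⟩, ⟨z, hz, rfl⟩⟩) ?_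
  rintro ⟨x, y⟩ ⟨⟨⟨x, y'⟩, hx, rfl⟩, ⟨⟨x', y⟩, hy, rfl⟩⟩
  rw [SetLike.mem_coe, mk_mem_iff_of_isCoprime hpq hp hq] at hx hy
  exact (mk_mem_iff_of_isCoprime hpq hp hq N).2 ⟨hx.1, hy.2⟩

def prodOrderIsoOfIsCoprime (hpq : IsCoprime p q) (hp : ∀ x : M₁, p • x = 0)
    (hq : ∀ y : M₂, q • y = 0) : Submodule R (M₁ × M₂) ≃o Submodule R M₁ × Submodule R M₂ :=
  Equiv.toOrderIso
    { toFun N := (N.map (LinearMap.fst R M₁ M₂), N.map (LinearMap.snd R M₁ M₂))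
      invFun P := P.1.prod P.2
      left_inv N := (eq_prod_map_fst_map_snd_of_isCoprime hpq hp hq N).symm
      right_inv _ := Prod.ext (prod_map_fst _ _) (prod_map_snd _ _) }
    (fun _ _ h => ⟨map_mono h, map_mono h⟩) (fun _ _ h => prod_mono h.1 h.2)

end Submodule

end Coprime

section PointModule

variable {K : Type*} [Field K]

lemma X_sub_C_smul_eq_zero (x : K) (m : K[X] ⧸ Ideal.span {X - C x}) : (X - C x) • m = 0 :=
  Module.mem_annihilator.1 ((Ideal.annihilator_quotient (I := Ideal.span {X - C x})).symm ▸
    Ideal.mem_span_singleton_self _) m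

instance isSimpleModule_quotient_span_X_sub_C (x : K) :
    IsSimpleModule K[X] (K[X] ⧸ Ideal.span {X - C x}) :=
  isSimpleModule_iff_isCoatom.2 <| Ideal.isMaximal_def.1 <|
    PrincipalIdealRing.isMaximal_of_irreducible (irreducible_X_sub_C x)

lemma isCoprime_X_sub_C_of_ne {x y : K} (h : x ≠ y) : IsCoprime (X - C x) (X - C y) :=
  isCoprime_X_sub_C_of_isUnit_sub (sub_ne_zero.2 h).isUnit

lemma LinearMap.eq_zero_of_pointModule_prod {a b c : K} (hab : a ≠ b) (hac : a ≠ c)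
    (f : (K[X] ⧸ Ideal.span {X - C a}) →ₗ[K[X]]
      (K[X] ⧸ Ideal.span {X - C b}) × (K[X] ⧸ Ideal.span {X - C c})) : f = 0 := by
  have h₁ := eq_zero_of_isCoprime (isCoprime_X_sub_C_of_ne hab) (X_sub_C_smul_eq_zero a)
    (X_sub_C_smul_eq_zero b) (fst _ _ _ ∘ₗ f)
  have h₂ := eq_zero_of_isCoprime (isCoprime_X_sub_C_of_ne hac) (X_sub_C_smul_eq_zero a)
    (X_sub_C_smul_eq_zero c) (snd _ _ _ ∘ₗ f)
  exact ext fun m => Prod.ext (LinearMap.congr_fun h₁ m) (LinearMap.congr_fun h₂ m)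

lemma card_bot_covBy_covBy_top_pointModule_prod {b c : K} (hbc : b ≠ c) :
    Nat.card {N : Submodule K[X]
      ((K[X] ⧸ Ideal.span {X - C b}) × (K[X] ⧸ Ideal.span {X - C c})) // ⊥ ⋖ N ∧ N ⋖ ⊤} = 2 :=
  ((Submodule.prodOrderIsoOfIsCoprime (isCoprime_X_sub_C_of_ne hbc) (X_sub_C_smul_eq_zero b)
    (X_sub_C_smul_eq_zero c)).card_bot_covBy_covBy_top).trans Prod.card_bot_covBy_covBy_top

end PointModule

lemma monotone_vec_bot_top {α : Type*} [PartialOrder α] [BoundedOrder α] {x y : α} (h : x ≤ y) :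
    Monotone ![⊥, x, y, ⊤] :=
  Fin.monotone_iff_le_succ.2 fun i => by fin_cases i <;> simp [h]

namespace AdmChain

variable {M N : Type*} [AddCommGroup M] [Module ℂ[X] M] [AddCommGroup N] [Module ℂ[X] N]

lemma stepI_iff {f : M →ₗ[ℂ[X]] N} (c : AdmChain f) (k : Fin 3) :
    StepI c k ↔ c.A k.succ = c.A k.castSucc ∧ c.B k.castSucc ⋖ c.B k.succ :=
  and_congr_right' (moduleLength_subquotient_eq_one_iff (c.monoB k.castSucc_le_succ))

lemma stepJ_iff {f : M →ₗ[ℂ[X]] N} (c : AdmChain f) (k : Fin 3) :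
    StepJ c k ↔ c.B k.succ = c.B k.castSucc ∧ c.A k.castSucc ⋖ c.A k.succ :=
  and_congr_right' (moduleLength_subquotient_eq_one_iff (c.monoA k.castSucc_le_succ))

lemma ext_of_middle {f : M →ₗ[ℂ[X]] N} {c d : AdmChain f} (hA₁ : c.A 1 = d.A 1)
    (hA₂ : c.A 2 = d.A 2) (hB₁ : c.B 1 = d.B 1) (hB₂ : c.B 2 = d.B 2) : c = d := by
  cases c
  cases d
  simp only [mk.injEq]
  constructor <;> funext k <;> fin_cases k <;> simp_all

noncomputable def mkZero (A₁ A₂ : Submodule ℂ[X] M) (B₁ B₂ : Submodule ℂ[X] N) (hA : A₁ ≤ A₂)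
    (hB : B₁ ≤ B₂) :
    AdmChain (0 : M →ₗ[ℂ[X]] N) where
  A := ![⊥, A₁, A₂, ⊤]
  B := ![⊥, B₁, B₂, ⊤]
  monoA := monotone_vec_bot_top hA
  monoB := monotone_vec_bot_top hB
  compat _ := by rw [Submodule.map_zero]; exact bot_le
  A_zero := rfl
  B_zero := rfl
  A_last := rfl
  B_last := rfl

variable [IsSimpleModule ℂ[X] M]

lemma stepIIJ_iff (c : AdmChain (0 : M →ₗ[ℂ[X]] N)) :
    (StepI c 0 ∧ StepI c 1 ∧ StepJ c 2) ↔
      ∃ X, (⊥ ⋖ X ∧ X ⋖ ⊤) ∧ c = mkZero ⊥ ⊥ X ⊤ le_rfl le_top := by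
  refine ⟨fun ⟨h₀, h₁, h₂⟩ => ?_, ?_⟩
  · obtain ⟨hA₁, hB₁⟩ : c.A 1 = c.A 0 ∧ c.B 0 ⋖ c.B 1 := (c.stepI_iff 0).1 h₀
    obtain ⟨hA₂, hB₂⟩ : c.A 2 = c.A 1 ∧ c.B 1 ⋖ c.B 2 := (c.stepI_iff 1).1 h₁
    obtain ⟨hB₃, -⟩ : c.B 3 = c.B 2 ∧ c.A 2 ⋖ c.A 3 := (c.stepJ_iff 2).1 h₂
    rw [c.A_zero] at hA₁
    rw [c.B_zero] at hB₁
    rw [c.B_last] at hB₃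
    exact ⟨c.B 1, ⟨hB₁, hB₃ ▸ hB₂⟩, ext_of_middle hA₁ (hA₂.trans hA₁) rfl hB₃.symm⟩
  · rintro ⟨X, hX, rfl⟩
    simp only [stepI_iff, stepJ_iff]
    exact ⟨⟨rfl, hX.1⟩, ⟨rfl, hX.2⟩, ⟨rfl, bot_covBy_top⟩⟩

lemma stepIJI_iff (c : AdmChain (0 : M →ₗ[ℂ[X]] N)) :
    (StepI c 0 ∧ StepJ c 1 ∧ StepI c 2) ↔
      ∃ X, (⊥ ⋖ X ∧ X ⋖ ⊤) ∧ c = mkZero ⊥ ⊤ X X bot_le le_rfl := by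
  refine ⟨fun ⟨h₀, h₁, h₂⟩ => ?_, ?_⟩
  · obtain ⟨hA₁, hB₁⟩ : c.A 1 = c.A 0 ∧ c.B 0 ⋖ c.B 1 := (c.stepI_iff 0).1 h₀
    obtain ⟨hB₂, hA₂⟩ : c.B 2 = c.B 1 ∧ c.A 1 ⋖ c.A 2 := (c.stepJ_iff 1).1 h₁
    obtain ⟨-, hB₃⟩ : c.A 3 = c.A 2 ∧ c.B 2 ⋖ c.B 3 := (c.stepI_iff 2).1 h₂
    rw [c.A_zero] at hA₁
    rw [c.B_zero] at hB₁
    rw [c.B_last, hB₂] at hB₃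
    exact ⟨c.B 1, ⟨hB₁, hB₃⟩, ext_of_middle hA₁ hA₂.lt.eq_top rfl hB₂⟩
  · rintro ⟨X, hX, rfl⟩
    simp only [stepI_iff, stepJ_iff]
    exact ⟨⟨rfl, hX.1⟩, ⟨rfl, bot_covBy_top⟩, ⟨rfl, hX.2⟩⟩

lemma stepJII_iff (c : AdmChain (0 : M →ₗ[ℂ[X]] N)) :
    (StepJ c 0 ∧ StepI c 1 ∧ StepI c 2) ↔
      ∃ X, (⊥ ⋖ X ∧ X ⋖ ⊤) ∧ c = mkZero ⊤ ⊤ ⊥ X le_rfl bot_le := by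
  refine ⟨fun ⟨h₀, h₁, h₂⟩ => ?_, ?_⟩
  · obtain ⟨hB₁, hA₁⟩ : c.B 1 = c.B 0 ∧ c.A 0 ⋖ c.A 1 := (c.stepJ_iff 0).1 h₀
    obtain ⟨hA₂, hB₂⟩ : c.A 2 = c.A 1 ∧ c.B 1 ⋖ c.B 2 := (c.stepI_iff 1).1 h₁
    obtain ⟨-, hB₃⟩ : c.A 3 = c.A 2 ∧ c.B 2 ⋖ c.B 3 := (c.stepI_iff 2).1 h₂
    rw [c.B_zero] at hB₁
    rw [hB₁] at hB₂
    rw [c.B_last] at hB₃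
    exact ⟨c.B 2, ⟨hB₂, hB₃⟩, ext_of_middle hA₁.lt.eq_top (hA₂.trans hA₁.lt.eq_top) hB₁ rfl⟩
  · rintro ⟨X, hX, rfl⟩
    simp only [stepI_iff, stepJ_iff]
    exact ⟨⟨rfl, bot_covBy_top⟩, ⟨rfl, hX.1⟩, ⟨rfl, hX.2⟩⟩

lemma card_stepIIJ :
    Nat.card {c : AdmChain (0 : M →ₗ[ℂ[X]] N) // StepI c 0 ∧ StepI c 1 ∧ StepJ c 2} =
      Nat.card {X : Submodule ℂ[X] N // ⊥ ⋖ X ∧ X ⋖ ⊤} :=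
  Nat.card_subtype_eq_of_iff_exists _ (fun _ _ h => congrArg (·.B 1) h) stepIIJ_iff

lemma card_stepIJI :
    Nat.card {c : AdmChain (0 : M →ₗ[ℂ[X]] N) // StepI c 0 ∧ StepJ c 1 ∧ StepI c 2} =
      Nat.card {X : Submodule ℂ[X] N // ⊥ ⋖ X ∧ X ⋖ ⊤} :=
  Nat.card_subtype_eq_of_iff_exists _ (fun _ _ h => congrArg (·.B 1) h) stepIJI_iff

lemma card_stepJII :
    Nat.card {c : AdmChain (0 : M →ₗ[ℂ[X]] N) // StepJ c 0 ∧ StepI c 1 ∧ StepI c 2} =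
      Nat.card {X : Submodule ℂ[X] N // ⊥ ⋖ X ∧ X ⋖ ⊤} :=
  Nat.card_subtype_eq_of_iff_exists _ (fun _ _ h => congrArg (·.B 2) h) stepJII_iff

end AdmChain

/-- Lemma 3.5.1(a) of the paper: for pairwise distinct `a`, `b`, `c`,
`T₁ = ℂ[z]/(z−a)`, `T₂ = ℂ[z]/(z−b) ⊕ ℂ[z]/(z−c)` and `f : T₁ → T₂` a `ℂ[z]`-module map
(necessarily `f = 0`), there are exactly `2` admissible chains of each of the step types
`(𝗂,𝗂,𝗃)`, `(𝗂,𝗃,𝗂)` and `(𝗃,𝗂,𝗂)`. -/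
theorem filtration_count_zero_map (a b c : ℂ) (hab : a ≠ b) (hac : a ≠ c) (hbc : b ≠ c)
    (f : (Polynomial ℂ ⧸ Ideal.span {Polynomial.X - Polynomial.C a}) →ₗ[Polynomial ℂ]
        ((Polynomial ℂ ⧸ Ideal.span {Polynomial.X - Polynomial.C b}) ×
         (Polynomial ℂ ⧸ Ideal.span {Polynomial.X - Polynomial.C c}))) :
    Nat.card {ch : AdmChain f // StepI ch 0 ∧ StepI ch 1 ∧ StepJ ch 2} = 2 ∧
    Nat.card {ch : AdmChain f // StepI ch 0 ∧ StepJ ch 1 ∧ StepI ch 2} = 2 ∧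
    Nat.card {ch : AdmChain f // StepJ ch 0 ∧ StepI ch 1 ∧ StepI ch 2} = 2 := by
  obtain rfl : f = 0 := LinearMap.eq_zero_of_pointModule_prod hab hac f
  rw [AdmChain.card_stepIIJ, AdmChain.card_stepIJI, AdmChain.card_stepJII,
    card_bot_covBy_covBy_top_pointModule_prod hbc]
  exact ⟨rfl, rfl, rfl⟩
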